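/- arXiv:2412.13557 — 2 statements merged into one kernel-verified Lean document; each statement's English description precedes it below -/
import Mathlib

section
/- Let f : S^{n-1} → (0,∞) be continuous and define the Wulff shape [f] = {x ∈ ℝⁿ : x·v ≤ f(v) for all v ∈ S^{n-1}} and the convex hull body ⟨f⟩ = conv{f(u)u : u ∈ S^{n-1}}. Then the polar body of [f] equals ⟨1/f⟩. -/
/-!
The Wulff shape `[f]` is the polar of `A = {f(u)⁻¹ u : u ∈ S^{n-1}}`, and `A` has the same polar as
its convex hull. By separation, a closed convex set containing `0` is its own bipolar. The hull of
`A` is closed, being compact by Carathéodory's theorem, and contains `0`, which lies on the segment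
between `f(u)⁻¹ u` and `f(-u)⁻¹ (-u)`.
-/

open Set Metric MeasureTheory

noncomputable def suppFn {n : ℕ} (K : Set (EuclideanSpace ℝ (Fin n)))
    (x : EuclideanSpace ℝ (Fin n)) : ℝ :=
  sSup ((fun y => inner ℝ x y : EuclideanSpace ℝ (Fin n) → ℝ) '' K)

noncomputable def radialFn {n : ℕ} (K : Set (EuclideanSpace ℝ (Fin n)))
    (x : EuclideanSpace ℝ (Fin n)) : ℝ :=
  sSup {t : ℝ | 0 < t ∧ t • x ∈ K}

def polarBody {n : ℕ} (K : Set (EuclideanSpace ℝ (Fin n))) :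
    Set (EuclideanSpace ℝ (Fin n)) :=
  {x | ∀ y ∈ K, (inner ℝ x y : ℝ) ≤ 1}

def wulff {n : ℕ} (f : EuclideanSpace ℝ (Fin n) → ℝ) : Set (EuclideanSpace ℝ (Fin n)) :=
  {x | ∀ v ∈ sphere (0 : EuclideanSpace ℝ (Fin n)) 1, (inner ℝ x v : ℝ) ≤ f v}

theorem IsCompact.convexHull {E : Type*} [NormedAddCommGroup E] [NormedSpace ℝ E]
    [FiniteDimensional ℝ E] {s : Set E} (hs : IsCompact s) : IsCompact (_root_.convexHull ℝ s) := by
  let combinations (k : ℕ) : Set E :=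
    (fun p : (Fin k → ℝ) × (Fin k → E) => ∑ i, p.1 i • p.2 i) ''
      (stdSimplex ℝ (Fin k) ×ˢ univ.pi fun _ => s)
  have hull_eq :
      _root_.convexHull ℝ s = ⋃ k ∈ Finset.range (Module.finrank ℝ E + 2), combinations k := by
    refine Subset.antisymm (fun x hx => ?_) (iUnion₂_subset fun k _ => ?_)
    · obtain ⟨ι, _, z, w, hzs, hind, hw0, hw1, rfl⟩ := eq_pos_convex_span_of_mem_convexHull hx
      have hcard : Fintype.card ι < Module.finrank ℝ E + 2 := by
        have := (vectorSpan ℝ (range z)).finrank_le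
        have := hind.card_le_finrank_succ
        omega
      let e := (Fintype.equivFin ι).symm
      refine mem_iUnion₂.2 ⟨_, Finset.mem_range.2 hcard, (w ∘ e, z ∘ e),
        ⟨⟨fun i => (hw0 _).le, ?_⟩, fun i _ => hzs ⟨_, rfl⟩⟩, e.sum_comp fun i => w i • z i⟩
      simpa only [Function.comp_apply, e.sum_comp] using hw1
    · rintro _ ⟨p, ⟨hw, hz⟩, rfl⟩
      exact mem_convexHull_of_exists_fintype p.1 p.2 hw.1 hw.2 (fun i => hz i trivial) rfl
  rw [hull_eq]
  exact (Finset.range _).isCompact_biUnion fun k _ =>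
    ((isCompact_stdSimplex ℝ (Fin k)).prod (isCompact_univ_pi fun _ => hs)).image (by fun_prop)

theorem zero_mem_convexHull_smul_sphere {E : Type*} [NormedAddCommGroup E] [NormedSpace ℝ E]
    [Nontrivial E] {c : E → ℝ} (hc : ∀ v ∈ sphere (0 : E) 1, 0 < c v) :
    (0 : E) ∈ convexHull ℝ ((fun u => c u • u) '' sphere 0 1) := by
  obtain ⟨v, hv⟩ := (NormedSpace.sphere_nonempty (x := (0 : E))).2 zero_le_one
  have hnv : -v ∈ sphere (0 : E) 1 := by simpa using hv
  refine segment_subset_convexHull (mem_image_of_mem _ hv) (mem_image_of_mem _ hnv) ?_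
  have ha := hc v hv
  have hb := hc (-v) hnv
  refine ⟨c (-v) / (c v + c (-v)), c v / (c v + c (-v)), by positivity, by positivity,
    by field_simp; ring, ?_⟩
  simp only [smul_neg, smul_smul, ← sub_eq_add_neg, ← sub_smul]
  rw [div_mul_eq_mul_div, div_mul_eq_mul_div, mul_comm, sub_self, zero_smul]

section Polar

variable {n : ℕ}

theorem wulff_eq_polarBody_image {f : EuclideanSpace ℝ (Fin n) → ℝ}
    (hfpos : ∀ v ∈ sphere (0 : EuclideanSpace ℝ (Fin n)) 1, 0 < f v) :
    wulff f = polarBody ((fun u => (f u)⁻¹ • u) '' sphere 0 1) := by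
  ext x
  simp only [wulff, polarBody, forall_mem_image, mem_ofPred_eq]
  refine forall₂_congr fun v hv => ?_
  rw [real_inner_smul_right, inv_mul_le_iff₀ (hfpos v hv), mul_one]

theorem polarBody_convexHull (A : Set (EuclideanSpace ℝ (Fin n))) :
    polarBody (convexHull ℝ A) = polarBody A := by
  ext x
  refine ⟨fun hx y hy => hx y (subset_convexHull ℝ A hy), fun hx y hy => ?_⟩
  exact convexHull_min (t := {y | inner ℝ x y ≤ 1}) hx
    (convex_halfSpace_le (innerₛₗ ℝ x).isLinear 1) hy

theorem polarBody_polarBody_of_isClosed_of_convex {C : Set (EuclideanSpace ℝ (Fin n))}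
    (hC : IsClosed C) (hconv : Convex ℝ C) (h0 : 0 ∈ C) : polarBody (polarBody C) = C := by
  refine Subset.antisymm (fun x hx => ?_) fun x hx y hy => real_inner_comm x y ▸ hy x hx
  by_contra hxC
  obtain ⟨g, u, hgC, hux⟩ := geometric_hahn_banach_closed_point hconv hC hxC
  have hu : 0 < u := by simpa using hgC 0 h0
  set w := (InnerProductSpace.toDual ℝ _).symm g
  have hg : ∀ z, g z = inner ℝ w z := fun z => InnerProductSpace.toDual_symm_apply.symm
  have hw : u⁻¹ • w ∈ polarBody C := fun y hy => by
    rw [real_inner_smul_left, ← hg, inv_mul_le_iff₀ hu, mul_one]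
    exact (hgC y hy).le
  have := hx _ hw
  rw [real_inner_comm, real_inner_smul_left, ← hg, inv_mul_le_iff₀ hu, mul_one] at this
  linarith

end Polar

theorem polar_wulff_eq_hull_inv {n : ℕ} (hn : 1 ≤ n)
    (f : EuclideanSpace ℝ (Fin n) → ℝ)
    (hf : ContinuousOn f (sphere (0 : EuclideanSpace ℝ (Fin n)) 1))
    (hfpos : ∀ v ∈ sphere (0 : EuclideanSpace ℝ (Fin n)) 1, 0 < f v) :
    polarBody (wulff f) =
      convexHull ℝ ((fun u => (f u)⁻¹ • u) '' sphere (0 : EuclideanSpace ℝ (Fin n)) 1) := by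
  have : Nonempty (Fin n) := ⟨⟨0, hn⟩⟩
  set A := (fun u => (f u)⁻¹ • u) '' sphere (0 : EuclideanSpace ℝ (Fin n)) 1
  have hcompact : IsCompact A :=
    (isCompact_sphere 0 1).image_of_continuousOn
      ((hf.inv₀ fun v hv => (hfpos v hv).ne').smul continuousOn_id)
  rw [wulff_eq_polarBody_image hfpos, ← polarBody_convexHull A]
  exact polarBody_polarBody_of_isClosed_of_convex hcompact.convexHull.isClosed
    (convex_convexHull ℝ _) (zero_mem_convexHull_smul_sphere fun v hv => inv_pos.2 (hfpos v hv))
end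

section
/- Let μ be a non-zero finite even Borel measure on S^{n-1} that is not concentrated on any closed hemisphere, let p > 0, q > 0, and for an origin-symmetric convex body Q define Φ(Q) = (1/p)∫_{S^{n-1}} h_Q(v)^p dμ(v) + ∫_{S^{n-1}} ∫_{ρ_Q(u)}^∞ e^{-r²/2} r^{q-1} dr du. If (Q_l) is a sequence of origin-symmetric convex bodies with sup_l Φ(Q_l) < ∞, then the sequence (Q_l) is uniformly bounded, i.e., there exists R > 0 with Q_l ⊆ R·B for all l. -/
open Set Metric MeasureTheory

noncomputable def gaussTail (q : ℝ) (s : ℝ) : ℝ :=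
  ∫ r in Ioi s, Real.exp (-r ^ 2 / 2) * r ^ (q - 1)

/-!
The Gaussian term of `Φ` is nonnegative, so `∫ h_Q^p dμ ≤ p C` along the sequence.
For `x ∈ Q` we have `(v·x)_+ ≤ h_Q(v)`, hence `‖x‖^p ∫ (v·u)_+^p dμ ≤ p C` with `u = x / ‖x‖`.
The integral `u ↦ ∫ (v·u)_+^p dμ` is continuous and positive on the compact sphere, so it is
bounded below by some `c₀ > 0`, which gives `‖x‖ ≤ (p C / c₀)^(1/p)`.
-/

lemma radialFn_nonneg {n : ℕ} (K : Set (EuclideanSpace ℝ (Fin n)))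
    (x : EuclideanSpace ℝ (Fin n)) : 0 ≤ radialFn K x :=
  Real.sSup_nonneg fun _ ht => ht.1.le

lemma gaussTail_nonneg (q : ℝ) {s : ℝ} (hs : 0 ≤ s) : 0 ≤ gaussTail q s :=
  setIntegral_nonneg measurableSet_Ioi fun _ hr =>
    mul_nonneg (Real.exp_pos _).le (Real.rpow_nonneg (hs.trans (le_of_lt hr)) _)

section suppFn

variable {n : ℕ} {K : Set (EuclideanSpace ℝ (Fin n))}

lemma le_suppFn (hK : IsCompact K) {y : EuclideanSpace ℝ (Fin n)} (hy : y ∈ K)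
    (x : EuclideanSpace ℝ (Fin n)) : inner ℝ x y ≤ suppFn K x :=
  le_csSup (hK.bddAbove_image (continuous_const.inner continuous_id).continuousOn)
    ⟨y, hy, rfl⟩

lemma suppFn_le (hne : K.Nonempty) {x : EuclideanSpace ℝ (Fin n)} {M : ℝ}
    (h : ∀ y ∈ K, inner ℝ x y ≤ M) : suppFn K x ≤ M :=
  csSup_le (hne.image _) (forall_mem_image.2 h)

lemma suppFn_nonneg (hK : IsCompact K) (h0 : 0 ∈ K) (x : EuclideanSpace ℝ (Fin n)) :
    0 ≤ suppFn K x := by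
  simpa using le_suppFn hK h0 x

lemma suppFn_add_le (hK : IsCompact K) (hne : K.Nonempty) (a b : EuclideanSpace ℝ (Fin n)) :
    suppFn K (a + b) ≤ suppFn K a + suppFn K b :=
  suppFn_le hne fun y hy => by
    rw [inner_add_left]
    exact add_le_add (le_suppFn hK hy a) (le_suppFn hK hy b)

lemma suppFn_le_mul_norm (hne : K.Nonempty) {M : ℝ} (hM : K ⊆ closedBall 0 M)
    (x : EuclideanSpace ℝ (Fin n)) : suppFn K x ≤ M * ‖x‖ :=
  suppFn_le hne fun y hy =>
    calc inner ℝ x y ≤ ‖x‖ * ‖y‖ := real_inner_le_norm x y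
      _ ≤ ‖x‖ * M := by gcongr; simpa using hM hy
      _ = M * ‖x‖ := mul_comm _ _

lemma lipschitzWith_suppFn (hK : IsCompact K) (hne : K.Nonempty) {M : ℝ}
    (hM : K ⊆ closedBall 0 M) : LipschitzWith M.toNNReal (suppFn K) :=
  LipschitzWith.of_le_add_mul' M fun a b =>
    calc suppFn K a = suppFn K (b + (a - b)) := by rw [add_sub_cancel]
      _ ≤ suppFn K b + suppFn K (a - b) := suppFn_add_le hK hne b (a - b)
      _ ≤ suppFn K b + M * dist a b := by
          rw [dist_eq_norm]; gcongr; exact suppFn_le_mul_norm hne hM _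

lemma continuous_suppFn (hK : IsCompact K) (hne : K.Nonempty) : Continuous (suppFn K) := by
  obtain ⟨M, hM⟩ := hK.isBounded.subset_closedBall 0
  exact (lipschitzWith_suppFn hK hne hM).continuous

lemma integrable_suppFn_rpow {μ : Measure (EuclideanSpace ℝ (Fin n))} [IsFiniteMeasure μ]
    (hμ : ∀ᵐ v ∂μ, ‖v‖ ≤ 1) (hK : IsCompact K) (h0 : 0 ∈ K) {p : ℝ} (hp : 0 ≤ p) :
    Integrable (fun v => suppFn K v ^ p) μ := by
  obtain ⟨M, hM⟩ := hK.isBounded.subset_closedBall 0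
  refine Integrable.of_bound
    ((continuous_suppFn hK ⟨0, h0⟩).rpow_const fun _ => Or.inr hp).aestronglyMeasurable
    (M ^ p) ?_
  filter_upwards [hμ] with v hv
  have hM0 : 0 ≤ M := by simpa using hM h0
  rw [Real.norm_of_nonneg (Real.rpow_nonneg (suppFn_nonneg hK h0 v) _)]
  gcongr
  · exact suppFn_nonneg hK h0 v
  · calc suppFn K v ≤ M * ‖v‖ := suppFn_le_mul_norm ⟨0, h0⟩ hM v
      _ ≤ M := mul_le_of_le_one_right hM0 hv

lemma posPart_inner_rpow_le_suppFn_rpow (hK : IsCompact K) (h0 : 0 ∈ K)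
    {x : EuclideanSpace ℝ (Fin n)} (hx : x ∈ K) {p : ℝ} (hp : 0 ≤ p)
    (v : EuclideanSpace ℝ (Fin n)) : max (inner ℝ v x) 0 ^ p ≤ suppFn K v ^ p := by
  gcongr
  exact max_le (le_suppFn hK hx v) (suppFn_nonneg hK h0 v)

end suppFn

section posInnerMoment

variable {E : Type*} [NormedAddCommGroup E] [InnerProductSpace ℝ E] [MeasurableSpace E]
  {μ : Measure E} {p : ℝ}

noncomputable def posInnerMoment (μ : Measure E) (p : ℝ) (u : E) : ℝ :=
  ∫ v, max (inner ℝ v u) 0 ^ p ∂μ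

lemma posInnerMoment_smul {t : ℝ} (ht : 0 ≤ t) (u : E) :
    posInnerMoment μ p (t • u) = t ^ p * posInnerMoment μ p u := by
  rw [posInnerMoment, posInnerMoment, ← integral_const_mul]
  congr 1 with v
  rw [real_inner_smul_right, ← Real.mul_rpow ht (le_max_right _ _),
    mul_max_of_nonneg _ _ ht, mul_zero]

lemma continuousOn_posInnerMoment [OpensMeasurableSpace E] [IsFiniteMeasure μ]
    (hμ : ∀ᵐ v ∂μ, ‖v‖ ≤ 1) (hp : 0 ≤ p) :
    ContinuousOn (posInnerMoment μ p) (closedBall 0 1) := by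
  rw [continuousOn_iff_continuous_domRestrict]
  refine continuous_of_dominated (bound := fun _ => 1) (fun u => ?_) (fun u => ?_)
    (integrable_const 1) (ae_of_all _ fun v => ?_)
  · exact (((continuous_id.inner continuous_const).max continuous_const).rpow_const
      fun _ => Or.inr hp).aestronglyMeasurable
  · filter_upwards [hμ] with v hv
    have hu : ‖(u : E)‖ ≤ 1 := mem_closedBall_zero_iff.1 u.2
    have hinner : inner ℝ v (u : E) ≤ 1 :=
      (real_inner_le_norm _ _).trans (mul_le_one₀ hv (norm_nonneg _) hu)
    rw [Real.norm_of_nonneg (Real.rpow_nonneg (le_max_right _ _) _)]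
    exact Real.rpow_le_one (le_max_right _ _) (max_le hinner zero_le_one) hp
  · exact ((continuous_const.inner continuous_subtype_val).max continuous_const).rpow_const
      fun _ => Or.inr hp

lemma mul_norm_rpow_le_posInnerMoment (hp : 0 < p) {c : ℝ}
    (hc : ∀ u ∈ sphere (0 : E) 1, c ≤ posInnerMoment μ p u) (x : E) :
    c * ‖x‖ ^ p ≤ posInnerMoment μ p x := by
  rcases eq_or_ne x 0 with rfl | hx
  · simp [posInnerMoment, Real.zero_rpow hp.ne']
  have hxu : ‖x‖ • (‖x‖⁻¹ • x) = x := smul_inv_smul₀ (norm_ne_zero_iff.2 hx) x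
  have hu : ‖x‖⁻¹ • x ∈ sphere (0 : E) 1 := by
    rw [mem_sphere_zero_iff_norm, norm_smul, norm_inv, norm_norm,
      inv_mul_cancel₀ (norm_ne_zero_iff.2 hx)]
  calc c * ‖x‖ ^ p = ‖x‖ ^ p * c := mul_comm _ _
    _ ≤ ‖x‖ ^ p * posInnerMoment μ p (‖x‖⁻¹ • x) := by gcongr; exact hc _ hu
    _ = posInnerMoment μ p x := by rw [← posInnerMoment_smul (norm_nonneg x), hxu]

end posInnerMoment

lemma posInnerMoment_le_integral_suppFn_rpow {n : ℕ} {μ : Measure (EuclideanSpace ℝ (Fin n))}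
    [IsFiniteMeasure μ] (hμ : ∀ᵐ v ∂μ, ‖v‖ ≤ 1) {K : Set (EuclideanSpace ℝ (Fin n))}
    (hK : IsCompact K) (h0 : 0 ∈ K) {x : EuclideanSpace ℝ (Fin n)} (hx : x ∈ K) {p : ℝ}
    (hp : 0 ≤ p) : posInnerMoment μ p x ≤ ∫ v, suppFn K v ^ p ∂μ :=
  integral_mono_of_nonneg (ae_of_all _ fun _ => Real.rpow_nonneg (le_max_right _ _) _)
    (integrable_suppFn_rpow hμ hK h0 hp)
    (ae_of_all _ (posPart_inner_rpow_le_suppFn_rpow hK h0 hx hp))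

theorem uniform_boundedness_of_functional_bound_general {n : ℕ}
    (p q : ℝ) (hp : 0 < p)
    (μ : Measure (EuclideanSpace ℝ (Fin n))) [IsFiniteMeasure μ]
    (hsupp : μ (sphere (0 : EuclideanSpace ℝ (Fin n)) 1)ᶜ = 0)
    (hnotconc : ∀ u ∈ sphere (0 : EuclideanSpace ℝ (Fin n)) 1,
      0 < ∫ v, max (inner ℝ v u : ℝ) 0 ^ p ∂μ)
    (Q : ℕ → Set (EuclideanSpace ℝ (Fin n)))
    (hcomp : ∀ l, IsCompact (Q l))
    (h0 : ∀ l, 0 ∈ interior (Q l))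
    (C : ℝ)
    (hΦ : ∀ l, (1 / p) * (∫ v, suppFn (Q l) v ^ p ∂μ) +
        (∫ u : sphere (0 : EuclideanSpace ℝ (Fin n)) 1,
          gaussTail q (radialFn (Q l) u) ∂(volume.toSphere)) ≤ C) :
    ∃ R > 0, ∀ l, Q l ⊆ closedBall (0 : EuclideanSpace ℝ (Fin n)) R := by
  have hsphere : ∀ᵐ v ∂μ, v ∈ sphere (0 : EuclideanSpace ℝ (Fin n)) 1 := mem_ae_iff.2 hsupp
  have hball : ∀ᵐ v ∂μ, ‖v‖ ≤ 1 := hsphere.mono fun v hv => (mem_sphere_zero_iff_norm.1 hv).le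
  obtain ⟨c, hc, hcF⟩ := (isCompact_sphere (0 : EuclideanSpace ℝ (Fin n)) 1).exists_forall_le'
    ((continuousOn_posInnerMoment hball hp.le).mono sphere_subset_closedBall) hnotconc
  have hsupp_bound : ∀ l, ∫ v, suppFn (Q l) v ^ p ∂μ ≤ p * C := fun l => by
    have hgauss : 0 ≤ ∫ u : sphere (0 : EuclideanSpace ℝ (Fin n)) 1,
        gaussTail q (radialFn (Q l) u) ∂(volume.toSphere) :=
      integral_nonneg fun u => gaussTail_nonneg q (radialFn_nonneg _ _)
    have hΦl := hΦ l
    rw [one_div] at hΦl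
    exact (inv_mul_le_iff₀ hp).1 (by linarith)
  refine ⟨max 1 ((p * C / c) ^ p⁻¹), lt_max_of_lt_left one_pos, fun l x hx => ?_⟩
  have hx_bound : ‖x‖ ^ p ≤ p * C / c := by
    rw [le_div_iff₀ hc, mul_comm]
    exact (mul_norm_rpow_le_posInnerMoment hp hcF x).trans
      ((posInnerMoment_le_integral_suppFn_rpow hball (hcomp l) (interior_subset (h0 l)) hx
        hp.le).trans (hsupp_bound l))
  rw [mem_closedBall_zero_iff]
  refine le_max_of_le_right ((Real.le_rpow_inv_iff_of_pos (norm_nonneg x) ?_ hp).2 hx_bound)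
  exact (Real.rpow_nonneg (norm_nonneg x) p).trans hx_bound

theorem uniform_boundedness_of_functional_bound {n : ℕ} (hn : 2 ≤ n)
    (p q : ℝ) (hp : 0 < p) (hq : 0 < q)
    (μ : Measure (EuclideanSpace ℝ (Fin n))) [IsFiniteMeasure μ] (hμ : μ ≠ 0)
    (hsupp : μ (sphere (0 : EuclideanSpace ℝ (Fin n)) 1)ᶜ = 0)
    (heven : μ.map (fun x => -x) = μ)
    (hnotconc : ∀ u ∈ sphere (0 : EuclideanSpace ℝ (Fin n)) 1,
      0 < ∫ v, max (inner ℝ v u : ℝ) 0 ^ p ∂μ)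
    (Q : ℕ → Set (EuclideanSpace ℝ (Fin n)))
    (hconv : ∀ l, Convex ℝ (Q l)) (hcomp : ∀ l, IsCompact (Q l))
    (h0 : ∀ l, 0 ∈ interior (Q l)) (hsym : ∀ l x, x ∈ Q l → -x ∈ Q l)
    (C : ℝ)
    (hΦ : ∀ l, (1 / p) * (∫ v, suppFn (Q l) v ^ p ∂μ) +
        (∫ u : sphere (0 : EuclideanSpace ℝ (Fin n)) 1,
          gaussTail q (radialFn (Q l) u) ∂(volume.toSphere)) ≤ C) :
    ∃ R > 0, ∀ l, Q l ⊆ closedBall (0 : EuclideanSpace ℝ (Fin n)) R :=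
  uniform_boundedness_of_functional_bound_general p q hp μ hsupp hnotconc Q hcomp h0 C hΦ
end
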